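/- For all ε, δ ∈ (0,1), there exists a positive integer n = O( ε^{−2} log(2/δ) ) such that for every positive integer m, with X = {⊥} ∪ {0,1}^m and P = {p₁, p₂} where p₁(⊥) = 0, p₂(⊥) = 1, and p₁(x) = p₂(x) = 1/2 for all x ∈ {0,1}^m, there exists an n-sample learner such that for every distribution μ over X and every target predictor p* ∈ [0,1]^X, given n i.i.d. examples from μ_{p*}, the learner outputs a predictor p with ‖p − p*‖_{μ,[−1,1]^X} ≤ inf_{p'∈P} ‖p' − p*‖_{μ,[−1,1]^X} + ε with probability at least 1 − δ. -/

import Mathlib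

/-!
On `[-1, 1]`-valued distinguishers the dual norm `‖f‖_{μ,D}` is the `L¹(μ)` norm, and `pLow`,
`pHigh` differ only at `⊥`, so `‖pLow - p*‖ - ‖pHigh - p*‖ = μ(⊥) (2 p*(⊥) - 1)`. This is exactly
the mean of the statistic that is `±1` on a sample `(⊥, o)` according to `o` and `0` elsewhere.
The learner outputs `pHigh` iff the empirical sum of this statistic is positive. It misses the
benchmark by more than `ε` only if the true mean has absolute value above `ε` while the empirical
sum has the wrong sign, which by a Chernoff bound has probability at most `exp(-ε² n / 4)`.
-/

open scoped ENNReal Pointwise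

noncomputable section

namespace OI

/-- Expectation of a real-valued function under a probability mass function. -/
def pexp {α : Type*} (q : PMF α) (f : α → ℝ) : ℝ := ∑' a, (q a).toReal * f a

/-- Inner product of two functions w.r.t. the distribution `μ`. -/
def inn {X : Type*} (μ : PMF X) (f g : X → ℝ) : ℝ := pexp μ fun x => f x * g x

/-- Dual Minkowski (semi)norm of `f` w.r.t. the class `F`. -/
def dnorm {X : Type*} (μ : PMF X) (F : Set (X → ℝ)) (f : X → ℝ) : ℝ :=
  sSup ((fun g => |inn μ f g|) '' F)

/-- `C` is an ε-covering of `G` w.r.t. the seminorm defined by `F`. -/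
def IsCover {X : Type*} (μ : PMF X) (F G : Set (X → ℝ)) (ε : ℝ) (C : Set (X → ℝ)) : Prop :=
  C ⊆ G ∧ ∀ g ∈ G, ∃ c ∈ C, dnorm μ F (g - c) ≤ ε

/-- Covering number `N_{μ,F}(G, ε)` (`⊤` if no finite covering exists). -/
def covN {X : Type*} (μ : PMF X) (F G : Set (X → ℝ)) (ε : ℝ) : ℕ∞ :=
  ⨅ (C : Set (X → ℝ)) (_ : IsCover μ F G ε C), C.encard

/-- Base-2 logarithm of an extended natural number (junk value on `⊤`). -/
def elog2 (N : ℕ∞) : ℝ := Real.logb 2 (N.toNat : ℝ)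

/-- Bernoulli distribution on `Bool` with mean (the truncation to `[0,1]` of) `r`. -/
def bern (r : ℝ) : PMF Bool :=
  PMF.ofFintype (fun b => cond b (min (ENNReal.ofReal r) 1) (1 - min (ENNReal.ofReal r) 1))
    (by simp [add_tsub_cancel_of_le (min_le_right (ENNReal.ofReal r) 1)])

/-- The distribution `μ_p` of individual-outcome pairs. -/
def exDist {X : Type*} (μ : PMF X) (p : X → ℝ) : PMF (X × Bool) :=
  μ.bind fun x => (bern (p x)).map fun o => (x, o)

/-- `n` i.i.d. samples from `q`. -/
def iid {α : Type*} (q : PMF α) : (n : ℕ) → PMF (Fin n → α)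
  | 0 => PMF.pure Fin.elim0
  | n + 1 => (iid q n).bind fun v => q.map fun a => Fin.cons a v

/-- Probability of an event under a PMF. -/
def prob {α : Type*} (q : PMF α) (E : Set α) : ℝ≥0∞ := q.toOuterMeasure E

/-- A (possibly randomized) `n`-sample learner. -/
abbrev Learner (X : Type*) (n : ℕ) := (Fin n → X × Bool) → PMF (X → ℝ)

/-- Distribution of the learner output on `n` i.i.d. samples from `μ_{p*}`. -/
def outDist {X : Type*} (μ : PMF X) (pstar : X → ℝ) {n : ℕ} (A : Learner X n) :
    PMF (X → ℝ) :=
  (iid (exDist μ pstar) n).bind A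

/-- `p` is a predictor, i.e. takes values in `[0,1]`. -/
def Predictor {X : Type*} (p : X → ℝ) : Prop := ∀ x, p x ∈ Set.Icc (0 : ℝ) 1

/-- `d` takes values in `[-1,1]`. -/
def Dist1 {X : Type*} (d : X → ℝ) : Prop := ∀ x, d x ∈ Set.Icc (-1 : ℝ) 1

/-- The class `[0,1]^X` of all predictors. -/
def allPred (X : Type*) : Set (X → ℝ) := {p | Predictor p}

/-- The learner `A` succeeds for target `pstar`: with probability at least `1 - δ` it outputs
a predictor whose maximum distinguishing advantage w.r.t. `pstar` over `D` is at most `ε`. -/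
def Achieves {X : Type*} (μ : PMF X) (D : Set (X → ℝ)) (ε δ : ℝ) (pstar : X → ℝ) {n : ℕ}
    (A : Learner X n) : Prop :=
  ENNReal.ofReal (1 - δ) ≤
    prob (outDist μ pstar A) {p | Predictor p ∧ dnorm μ D (p - pstar) ≤ ε}

/-- The agnostic benchmark `inf_{p' ∈ P} ‖p' - pstar‖_{μ,D}`. -/
def agTarget {X : Type*} (μ : PMF X) (P D : Set (X → ℝ)) (pstar : X → ℝ) : ℝ :=
  sInf ((fun p' => dnorm μ D (p' - pstar)) '' P)

/-- The learner `A` succeeds agnostically for target `pstar`. -/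
def AchievesAg {X : Type*} (μ : PMF X) (P D : Set (X → ℝ)) (ε δ : ℝ) (pstar : X → ℝ) {n : ℕ}
    (A : Learner X n) : Prop :=
  ENNReal.ofReal (1 - δ) ≤
    prob (outDist μ pstar A)
      {p | Predictor p ∧ dnorm μ D (p - pstar) ≤ agTarget μ P D pstar + ε}

/-- Distribution-specific realizable OI learner. -/
def DSRL {X : Type*} (μ : PMF X) (P D : Set (X → ℝ)) (ε δ : ℝ) (n : ℕ)
    (A : Learner X n) : Prop :=
  ∀ pstar ∈ P, Achieves μ D ε δ pstar A

/-- Distribution-specific agnostic OI learner. -/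
def DSAL {X : Type*} (μ : PMF X) (P D : Set (X → ℝ)) (ε δ : ℝ) (n : ℕ)
    (A : Learner X n) : Prop :=
  ∀ pstar : X → ℝ, Predictor pstar → AchievesAg μ P D ε δ pstar A

/-- Distribution-free realizable OI learner. -/
def DFRL {X : Type*} (P D : Set (X → ℝ)) (ε δ : ℝ) (n : ℕ) (A : Learner X n) : Prop :=
  ∀ μ : PMF X, DSRL μ P D ε δ n A

/-- Distribution-free agnostic OI learner. -/
def DFAL {X : Type*} (P D : Set (X → ℝ)) (ε δ : ℝ) (n : ℕ) (A : Learner X n) : Prop :=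
  ∀ μ : PMF X, DSAL μ P D ε δ n A

/-- Sample complexity of distribution-specific realizable OI. -/
def SAMPDSR {X : Type*} (μ : PMF X) (P D : Set (X → ℝ)) (ε δ : ℝ) : ℕ∞ :=
  ⨅ (n : ℕ) (_ : ∃ A : Learner X n, DSRL μ P D ε δ n A), (n : ℕ∞)

/-- Sample complexity of distribution-specific agnostic OI. -/
def SAMPDSA {X : Type*} (μ : PMF X) (P D : Set (X → ℝ)) (ε δ : ℝ) : ℕ∞ :=
  ⨅ (n : ℕ) (_ : ∃ A : Learner X n, DSAL μ P D ε δ n A), (n : ℕ∞)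

/-- Sample complexity of distribution-free realizable OI. -/
def SAMPDFR {X : Type*} (P D : Set (X → ℝ)) (ε δ : ℝ) : ℕ∞ :=
  ⨅ (n : ℕ) (_ : ∃ A : Learner X n, DFRL P D ε δ n A), (n : ℕ∞)

/-- Sample complexity of distribution-free agnostic OI. -/
def SAMPDFA {X : Type*} (P D : Set (X → ℝ)) (ε δ : ℝ) : ℕ∞ :=
  ⨅ (n : ℕ) (_ : ∃ A : Learner X n, DFAL P D ε δ n A), (n : ℕ∞)

/-- The points `x 0, …, x (n-1)` are `γ`-fat shattered by `F`. -/
def Shatters {X : Type*} (F : Set (X → ℝ)) (γ : ℝ) {n : ℕ} (x : Fin n → X) : Prop :=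
  ∃ r : Fin n → ℝ, ∀ b : Fin n → Bool, ∃ f ∈ F,
    ∀ i, γ ≤ (if b i then (1 : ℝ) else -1) * (f (x i) - r i)

/-- The `γ`-fat-shattering dimension of `F`. -/
def fatDim {X : Type*} (F : Set (X → ℝ)) (γ : ℝ) : ℕ∞ :=
  ⨆ (n : ℕ) (_ : ∃ x : Fin n → X, Shatters F γ x), (n : ℕ∞)

end OI


open OI

/-- The domain `X = {⊥} ∪ {0,1}^m`, with `none` playing the role of `⊥`. -/
abbrev Cube (m : ℕ) := Option (Fin m → Bool)

/-- The predictor `p₁` with `p₁(⊥) = 0` and `p₁(x) = 1/2` on the cube. -/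
def pLow (m : ℕ) : Cube m → ℝ := fun x => x.elim 0 fun _ => 1 / 2

/-- The predictor `p₂` with `p₂(⊥) = 1` and `p₂(x) = 1/2` on the cube. -/
def pHigh (m : ℕ) : Cube m → ℝ := fun x => x.elim 1 fun _ => 1 / 2

namespace OI

variable {α β X : Type*}

def lexp (q : PMF α) (f : α → ℝ≥0∞) : ℝ≥0∞ := ∑' a, q a * f a

lemma lexp_bind (q : PMF α) (k : α → PMF β) (f : β → ℝ≥0∞) :
    lexp (q.bind k) f = lexp q fun a => lexp (k a) f := by
  simp only [lexp, PMF.bind_apply, ← ENNReal.tsum_mul_right, ← ENNReal.tsum_mul_left, mul_assoc]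
  exact ENNReal.tsum_comm

lemma lexp_pure (a : α) (f : α → ℝ≥0∞) : lexp (PMF.pure a) f = f a := by
  rw [lexp, tsum_eq_single a fun b hb => by rw [PMF.pure_apply_of_ne _ _ hb, zero_mul],
    PMF.pure_apply_self, one_mul]

lemma lexp_map (q : PMF α) (g : α → β) (f : β → ℝ≥0∞) :
    lexp (q.map g) f = lexp q (f ∘ g) := by
  simp only [← PMF.bind_pure_comp, lexp_bind, Function.comp_apply, lexp_pure]
  rfl

lemma lexp_const_mul (q : PMF α) (c : ℝ≥0∞) (f : α → ℝ≥0∞) :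
    lexp q (fun a => c * f a) = c * lexp q f := by
  simp only [lexp, mul_left_comm _ c, ENNReal.tsum_mul_left]

lemma lexp_iid_prod (q : PMF α) (f : α → ℝ≥0∞) (n : ℕ) :
    lexp (iid q n) (fun v => ∏ i, f (v i)) = lexp q f ^ n := by
  induction n with
  | zero => simp [iid, lexp_pure]
  | succ n ih =>
    have hcons (v : Fin n → α) : lexp (q.map fun a => Fin.cons a v) (fun w => ∏ i, f (w i)) =
        lexp q f * ∏ i, f (v i) := by
      rw [lexp_map]
      simp only [lexp, Function.comp_apply, Fin.prod_univ_succ, Fin.cons_zero, Fin.cons_succ,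
        ← ENNReal.tsum_mul_right, mul_assoc]
    simp only [iid, lexp_bind, hcons, lexp_const_mul, ih, pow_succ, mul_comm]

lemma prob_le_lexp (q : PMF α) {E : Set α} {f : α → ℝ≥0∞} (hf : ∀ a ∈ E, 1 ≤ f a) :
    prob q E ≤ lexp q f := by
  rw [prob, PMF.toOuterMeasure_apply]
  refine ENNReal.tsum_le_tsum fun a => ?_
  by_cases ha : a ∈ E
  · simpa [Set.indicator_of_mem ha] using mul_le_mul_right (hf a ha) (q a)
  · simp [Set.indicator_of_notMem ha]

lemma prob_add_prob_compl (q : PMF α) (S : Set α) : prob q S + prob q Sᶜ = 1 := by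
  simp only [prob, PMF.toOuterMeasure_apply, ← ENNReal.tsum_add,
    Set.indicator_self_add_compl_apply, q.tsum_coe]

lemma ofReal_one_sub_le_prob (q : PMF α) {S : Set α} {δ : ℝ} (hδ : 0 ≤ δ)
    (h : prob q Sᶜ ≤ ENNReal.ofReal δ) : ENNReal.ofReal (1 - δ) ≤ prob q S := by
  rw [ENNReal.ofReal_sub _ hδ, ENNReal.ofReal_one, ← prob_add_prob_compl q S]
  exact tsub_le_iff_right.2 (by gcongr)

lemma prob_mono (q : PMF α) {S T : Set α} (h : S ⊆ T) : prob q S ≤ prob q T :=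
  MeasureTheory.measure_mono h

lemma summable_toReal_mul (q : PMF α) {f : α → ℝ} {B : ℝ} (hf : ∀ a, |f a| ≤ B) :
    Summable fun a => (q a).toReal * f a := by
  have hq : Summable fun a => (q a).toReal :=
    ENNReal.summable_toReal (by rw [q.tsum_coe]; exact ENNReal.one_ne_top)
  refine Summable.of_norm_bounded (hq.mul_right B) fun a => ?_
  rw [norm_mul, Real.norm_eq_abs, Real.norm_eq_abs, abs_of_nonneg ENNReal.toReal_nonneg]
  exact mul_le_mul_of_nonneg_left (hf a) ENNReal.toReal_nonneg

lemma pexp_const (q : PMF α) (c : ℝ) : pexp q (fun _ => c) = c := by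
  rw [pexp, tsum_mul_right, ← ENNReal.tsum_toReal_eq q.apply_ne_top, q.tsum_coe,
    ENNReal.toReal_one, one_mul]

lemma pexp_const_mul (q : PMF α) (c : ℝ) (f : α → ℝ) :
    pexp q (fun a => c * f a) = c * pexp q f := by
  simp only [pexp, mul_left_comm _ c, tsum_mul_left]

lemma pexp_neg (q : PMF α) (f : α → ℝ) : pexp q (fun a => -f a) = -pexp q f := by
  simp only [pexp, mul_neg, tsum_neg]

lemma pexp_sub (q : PMF α) {f g : α → ℝ} {B C : ℝ} (hf : ∀ a, |f a| ≤ B)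
    (hg : ∀ a, |g a| ≤ C) : pexp q (fun a => f a - g a) = pexp q f - pexp q g := by
  simp only [pexp, mul_sub]
  exact (summable_toReal_mul q hf).tsum_sub (summable_toReal_mul q hg)

lemma pexp_mono (q : PMF α) {f g : α → ℝ} {B C : ℝ} (hf : ∀ a, |f a| ≤ B)
    (hg : ∀ a, |g a| ≤ C) (h : ∀ a, f a ≤ g a) : pexp q f ≤ pexp q g :=
  (summable_toReal_mul q hf).tsum_le_tsum
    (fun a => mul_le_mul_of_nonneg_left (h a) ENNReal.toReal_nonneg) (summable_toReal_mul q hg)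

lemma pexp_nonneg (q : PMF α) {f : α → ℝ} (hf : ∀ a, 0 ≤ f a) : 0 ≤ pexp q f :=
  tsum_nonneg fun a => mul_nonneg ENNReal.toReal_nonneg (hf a)

lemma lexp_ofReal (q : PMF α) {f : α → ℝ} {B : ℝ} (h0 : ∀ a, 0 ≤ f a) (hB : ∀ a, f a ≤ B) :
    lexp q (fun a => ENNReal.ofReal (f a)) = ENNReal.ofReal (pexp q f) := by
  rw [pexp, ENNReal.ofReal_tsum_of_nonneg (fun a => mul_nonneg ENNReal.toReal_nonneg (h0 a))
    (summable_toReal_mul q fun a => (abs_of_nonneg (h0 a)).trans_le (hB a))]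
  refine tsum_congr fun a => ?_
  rw [ENNReal.ofReal_mul ENNReal.toReal_nonneg, ENNReal.ofReal_toReal (q.apply_ne_top a)]

lemma pexp_le_of_abs_le (q : PMF α) {f : α → ℝ} {B : ℝ} (hf : ∀ a, |f a| ≤ B) :
    pexp q f ≤ B :=
  (pexp_mono q hf (fun _ => le_refl |B|) fun a => (le_abs_self _).trans (hf a)).trans_eq
    (pexp_const q B)

lemma pexp_exp_neg_mul_le (q : PMF α) {Z : α → ℝ} (hZ : ∀ a, |Z a| ≤ 1) {ε : ℝ} (hε : 0 ≤ ε)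
    (hε1 : ε ≤ 1) (hmean : ε ≤ pexp q Z) :
    pexp q (fun a => Real.exp (-(ε / 2 * Z a))) ≤ 1 - ε ^ 2 / 4 := by
  have hlin : ∀ a, |(1 + ε ^ 2 / 4) - ε / 2 * Z a| ≤ 2 := fun a => by
    have := abs_le.1 (hZ a)
    rw [abs_le]; constructor <;> nlinarith
  -- `exp u ≤ 1 + u + u ^ 2` on `[-1, 1]`; the rate `ε / 2` minimises `1 - λ ε + λ ^ 2` over `λ`.
  have hquad : ∀ a, Real.exp (-(ε / 2 * Z a)) ≤ (1 + ε ^ 2 / 4) - ε / 2 * Z a := fun a => by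
    have hZa := abs_le.1 (hZ a)
    have hu : |-(ε / 2 * Z a)| ≤ 1 := by rw [abs_le]; constructor <;> nlinarith
    have hZ2 : Z a ^ 2 ≤ 1 := by nlinarith
    have := (abs_le.1 (Real.abs_exp_sub_one_sub_id_le hu)).2
    nlinarith [mul_le_mul_of_nonneg_left hZ2 (sq_nonneg ε)]
  calc pexp q (fun a => Real.exp (-(ε / 2 * Z a)))
      ≤ pexp q (fun a => (1 + ε ^ 2 / 4) - ε / 2 * Z a) :=
        pexp_mono q (fun a => (abs_of_pos (Real.exp_pos _)).trans_le ((hquad a).trans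
          (le_abs_self _ |>.trans (hlin a)))) hlin hquad
    _ = (1 + ε ^ 2 / 4) - ε / 2 * pexp q Z := by
        rw [pexp_sub q (fun _ => le_refl |1 + ε ^ 2 / 4|)
          (fun a => (abs_mul _ _).trans_le (mul_le_mul_of_nonneg_left (hZ a) (abs_nonneg _))),
          pexp_const, pexp_const_mul]
    _ ≤ 1 - ε ^ 2 / 4 := by nlinarith

theorem prob_sum_nonpos_le (q : PMF α) {Z : α → ℝ} (hZ : ∀ a, |Z a| ≤ 1) {ε : ℝ} (hε : 0 ≤ ε)
    (hmean : ε ≤ pexp q Z) (n : ℕ) :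
    prob (iid q n) {v | ∑ i, Z (v i) ≤ 0} ≤ ENNReal.ofReal (Real.exp (-(ε ^ 2 / 4) * n)) := by
  have hε1 : ε ≤ 1 := hmean.trans (pexp_le_of_abs_le q hZ)
  set g : α → ℝ := fun a => Real.exp (-(ε / 2 * Z a))
  have hg0 : ∀ a, 0 ≤ g a := fun a => (Real.exp_pos _).le
  have hg1 : ∀ a, g a ≤ Real.exp 1 := fun a => by
    refine Real.exp_le_exp.2 ?_
    have := abs_le.1 (hZ a)
    nlinarith
  have hmarkov : prob (iid q n) {v | ∑ i, Z (v i) ≤ 0} ≤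
      lexp (iid q n) fun v => ∏ i, ENNReal.ofReal (g (v i)) := by
    refine prob_le_lexp _ fun v (hv : ∑ i, Z (v i) ≤ 0) => ?_
    rw [← ENNReal.ofReal_prod_of_nonneg fun i _ => hg0 _, ENNReal.one_le_ofReal, ← Real.exp_sum,
      Finset.sum_neg_distrib, ← Finset.mul_sum]
    exact Real.one_le_exp (by nlinarith)
  calc prob (iid q n) {v | ∑ i, Z (v i) ≤ 0}
      ≤ lexp (iid q n) fun v => ∏ i, ENNReal.ofReal (g (v i)) := hmarkov
    _ = ENNReal.ofReal (pexp q g) ^ n := by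
        rw [lexp_iid_prod q (fun a => ENNReal.ofReal (g a)), lexp_ofReal q hg0 hg1]
    _ ≤ ENNReal.ofReal (Real.exp (-(ε ^ 2 / 4))) ^ n := by
        gcongr
        linarith [pexp_exp_neg_mul_le q hZ hε hε1 hmean, Real.add_one_le_exp (-(ε ^ 2 / 4))]
    _ = ENNReal.ofReal (Real.exp (-(ε ^ 2 / 4) * n)) := by
        rw [← ENNReal.ofReal_pow (Real.exp_pos _).le, ← Real.exp_nat_mul, mul_comm]

lemma abs_inn_le_pexp_abs (μ : PMF X) {f d : X → ℝ} {B : ℝ} (hf : ∀ x, |f x| ≤ B)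
    (hd : Dist1 d) : |inn μ f d| ≤ pexp μ fun x => |f x| := by
  have hfd : ∀ x, |f x * d x| ≤ |f x| := fun x => by
    rw [abs_mul]; exact mul_le_of_le_one_right (abs_nonneg _) (abs_le.2 (hd x))
  have hfd' : ∀ x, |f x * d x| ≤ B := fun x => (hfd x).trans (hf x)
  have hf' : ∀ x, |(|f x|)| ≤ B := fun x => (abs_abs (f x)).trans_le (hf x)
  refine abs_le.2 ⟨?_, ?_⟩
  · rw [← pexp_neg]
    refine pexp_mono μ (fun x => (abs_neg (|f x|)).trans_le (hf' x)) hfd' fun x => ?_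
    exact neg_le.1 ((neg_le_abs _).trans (hfd x))
  · exact pexp_mono μ hfd' hf' fun x => (le_abs_self _).trans (hfd x)

lemma inn_sign (μ : PMF X) (f : X → ℝ) :
    inn μ f (fun x => if 0 ≤ f x then 1 else -1) = pexp μ fun x => |f x| := by
  refine tsum_congr fun x => congrArg _ ?_
  dsimp only
  split_ifs with h
  · rw [mul_one, abs_of_nonneg h]
  · rw [mul_neg_one, abs_of_neg (not_le.1 h)]

theorem dnorm_dist1_eq (μ : PMF X) {f : X → ℝ} {B : ℝ} (hf : ∀ x, |f x| ≤ B) :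
    dnorm μ {d | Dist1 d} f = pexp μ fun x => |f x| := by
  have hsign : Dist1 fun x => if 0 ≤ f x then (1 : ℝ) else -1 := fun x => by
    dsimp only
    split_ifs <;> norm_num
  refine IsGreatest.csSup_eq ⟨⟨_, hsign, ?_⟩, ?_⟩
  · beta_reduce
    rw [inn_sign, abs_of_nonneg (pexp_nonneg μ fun x => abs_nonneg (f x))]
  · rintro _ ⟨d, hd, rfl⟩
    exact abs_inn_le_pexp_abs μ hf hd

lemma bern_true {r : ℝ} (h1 : r ≤ 1) : bern r true = ENNReal.ofReal r := by
  simp [bern, ENNReal.ofReal_le_one.2 h1]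

lemma bern_false {r : ℝ} (h0 : 0 ≤ r) (h1 : r ≤ 1) : bern r false = ENNReal.ofReal (1 - r) := by
  simp [bern, ENNReal.ofReal_le_one.2 h1, ENNReal.ofReal_sub _ h0]

lemma exDist_apply (μ : PMF X) (p : X → ℝ) (x : X) (o : Bool) :
    exDist μ p (x, o) = μ x * bern (p x) o := by
  rw [exDist, PMF.bind_apply, tsum_eq_single x fun y hy => ?_]
  · rw [PMF.map_apply, tsum_eq_single o fun b hb => if_neg (by simp [Ne.symm hb])]
    simp
  · simp [PMF.map_apply, Ne.symm hy]

lemma prob_outDist_pure (μ : PMF X) (pstar : X → ℝ) {n : ℕ}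
    (dec : (Fin n → X × Bool) → X → ℝ) (S : Set (X → ℝ)) :
    prob (outDist μ pstar fun v => PMF.pure (dec v)) S =
      prob (iid (exDist μ pstar) n) (dec ⁻¹' S) :=
  PMF.toOuterMeasure_map_apply dec _ S

lemma le_agTarget_pair_add {μ : PMF X} {D : Set (X → ℝ)} {p₁ p₂ pstar : X → ℝ} {ε : ℝ}
    {p : X → ℝ} (h₁ : dnorm μ D (p - pstar) ≤ dnorm μ D (p₁ - pstar) + ε)
    (h₂ : dnorm μ D (p - pstar) ≤ dnorm μ D (p₂ - pstar) + ε) :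
    dnorm μ D (p - pstar) ≤ agTarget μ {p₁, p₂} D pstar + ε := by
  rw [agTarget, Set.image_pair, csInf_pair, ← min_add_add_right]
  exact le_min h₁ h₂

def testLearner (p₁ p₂ : X → ℝ) (Z : X × Bool → ℝ) (n : ℕ) : Learner X n :=
  fun v => PMF.pure (if ∑ i, Z (v i) ≤ 0 then p₁ else p₂)

theorem achievesAg_testLearner {μ : PMF X} {D : Set (X → ℝ)} {p₁ p₂ pstar : X → ℝ}
    (hp₁ : Predictor p₁) (hp₂ : Predictor p₂) {Z : X × Bool → ℝ} (hZ : ∀ s, |Z s| ≤ 1)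
    (hgap : pexp (exDist μ pstar) Z = dnorm μ D (p₁ - pstar) - dnorm μ D (p₂ - pstar))
    {ε δ : ℝ} (hε : 0 ≤ ε) {n : ℕ} (hn : Real.exp (-(ε ^ 2 / 4) * n) ≤ δ) :
    AchievesAg μ {p₁, p₂} D ε δ pstar (testLearner p₁ p₂ Z n) := by
  set q := exDist μ pstar
  set S := {p | Predictor p ∧ dnorm μ D (p - pstar) ≤ agTarget μ {p₁, p₂} D pstar + ε}
  set dec : (Fin n → X × Bool) → X → ℝ := fun v => if ∑ i, Z (v i) ≤ 0 then p₁ else p₂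
  have hp₁S : pexp q Z ≤ ε → p₁ ∈ S := fun h =>
    ⟨hp₁, le_agTarget_pair_add (by linarith) (by linarith)⟩
  have hp₂S : -ε ≤ pexp q Z → p₂ ∈ S := fun h =>
    ⟨hp₂, le_agTarget_pair_add (by linarith) (by linarith)⟩
  have hchernoff {Y : X × Bool → ℝ} (hY : ∀ s, |Y s| ≤ 1) (hmean : ε ≤ pexp q Y) :
      prob (iid q n) {v | ∑ i, Y (v i) ≤ 0} ≤ ENNReal.ofReal δ :=
    (prob_sum_nonpos_le q hY hε hmean n).trans (ENNReal.ofReal_le_ofReal hn)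
  refine ofReal_one_sub_le_prob _ ((Real.exp_pos _).le.trans hn) ?_
  change prob (outDist μ pstar fun v => PMF.pure (dec v)) Sᶜ ≤ _
  rw [prob_outDist_pure]
  rcases lt_or_ge ε (pexp q Z) with hpos | hle
  · refine (prob_mono _ fun v (hv : dec v ∉ S) => ?_).trans (hchernoff hZ hpos.le)
    show ∑ i, Z (v i) ≤ 0
    by_contra h
    exact hv (by simpa only [dec, if_neg h] using hp₂S (by linarith))
  rcases lt_or_ge (pexp q Z) (-ε) with hneg | hge
  · refine (prob_mono _ fun v (hv : dec v ∉ S) => ?_).trans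
      (hchernoff (fun s => (abs_neg (Z s)).trans_le (hZ s)) (by rw [pexp_neg]; linarith))
    show ∑ i, -Z (v i) ≤ 0
    rw [Finset.sum_neg_distrib, neg_nonpos]
    by_contra h
    exact hv (by simpa only [dec, if_pos (not_le.1 h).le] using hp₁S hle)
  · have hgood (v : Fin n → X × Bool) : dec v ∈ S := by
      dsimp only [dec]
      split_ifs
      exacts [hp₁S hle, hp₂S hge]
    have hempty : dec ⁻¹' Sᶜ = ∅ := Set.eq_empty_of_forall_notMem fun v hv => hv (hgood v)
    rw [hempty, prob, MeasureTheory.measure_empty]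
    exact zero_le

lemma Predictor.abs_sub_le_one {p p' : X → ℝ} (hp : Predictor p)
    (hp' : Predictor p') (x : X) : |(p - p') x| ≤ 1 :=
  abs_sub_le_of_nonneg_of_le (hp x).1 (hp x).2 (hp' x).1 (hp' x).2

end OI

lemma predictor_pLow (m : ℕ) : Predictor (pLow m) := by
  rintro (_ | _) <;> norm_num [pLow]

lemma predictor_pHigh (m : ℕ) : Predictor (pHigh m) := by
  rintro (_ | _) <;> norm_num [pHigh]

lemma dnorm_pLow_sub_sub_dnorm_pHigh_sub (m : ℕ) (μ : PMF (Cube m)) {p : Cube m → ℝ}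
    (hp : Predictor p) :
    dnorm μ {d | Dist1 d} (pLow m - p) - dnorm μ {d | Dist1 d} (pHigh m - p) =
      (μ none).toReal * (2 * p none - 1) := by
  have hLow := (predictor_pLow m).abs_sub_le_one hp
  have hHigh := (predictor_pHigh m).abs_sub_le_one hp
  rw [dnorm_dist1_eq μ hLow, dnorm_dist1_eq μ hHigh,
    ← pexp_sub μ (fun x => (abs_abs _).trans_le (hLow x)) fun x => (abs_abs _).trans_le (hHigh x),
    pexp, tsum_eq_single none]
  · have h0 := (hp none).1
    have h1 := (hp none).2
    simp only [Pi.sub_apply, pLow, pHigh, Option.elim, zero_sub, abs_neg, abs_of_nonneg h0,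
      abs_of_nonneg (sub_nonneg.2 h1)]
    ring
  · rintro (_ | _) hx
    · exact absurd rfl hx
    · simp [pLow, pHigh]

def botStat (m : ℕ) : Cube m × Bool → ℝ
  | (none, o) => if o then 1 else -1
  | (some _, _) => 0

lemma abs_botStat_le (m : ℕ) (s : Cube m × Bool) : |botStat m s| ≤ 1 := by
  rcases s with ⟨_ | _, _ | _⟩ <;> simp [botStat]

lemma pexp_exDist_botStat (m : ℕ) (μ : PMF (Cube m)) {p : Cube m → ℝ} (h0 : 0 ≤ p none)
    (h1 : p none ≤ 1) : pexp (exDist μ p) (botStat m) = (μ none).toReal * (2 * p none - 1) := by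
  rw [pexp, tsum_eq_sum (s := {(none, true), (none, false)}), Finset.sum_pair (by simp),
    exDist_apply, exDist_apply, bern_true h1, bern_false h0 h1]
  · simp only [botStat, ENNReal.toReal_mul, ENNReal.toReal_ofReal h0,
      ENNReal.toReal_ofReal (sub_nonneg.2 h1)]
    norm_num
    ring
  · rintro ⟨_ | _, _ | _⟩ h <;> simp_all [botStat]

lemma exists_sampleSize {ε δ : ℝ} (hε : ε ∈ Set.Ioo (0 : ℝ) 1) (hδ : δ ∈ Set.Ioo (0 : ℝ) 1) :
    ∃ n : ℕ, 0 < n ∧ (n : ℝ) ≤ 8 * ε⁻¹ ^ 2 * Real.logb 2 (2 / δ) ∧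
      Real.exp (-(ε ^ 2 / 4) * n) ≤ δ := by
  have hlog : Real.log 2 ≤ Real.log (2 / δ) :=
    Real.log_le_log two_pos (by rw [le_div_iff₀ hδ.1]; linarith [hδ.2])
  have hε2 : 1 ≤ ε⁻¹ ^ 2 := one_le_pow₀ ((one_le_inv₀ hε.1).2 hε.2.le)
  set x := 4 * ε⁻¹ ^ 2 * Real.log (2 / δ) with hx_def
  have hx : 1 ≤ x := by nlinarith [Real.log_two_gt_d9]
  refine ⟨⌈x⌉₊, Nat.ceil_pos.2 (by linarith), ?_, ?_⟩
  · calc (⌈x⌉₊ : ℝ) ≤ 8 * ε⁻¹ ^ 2 * Real.log (2 / δ) := by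
          linarith [Nat.ceil_lt_add_one (by linarith : 0 ≤ x)]
      _ ≤ 8 * ε⁻¹ ^ 2 * Real.logb 2 (2 / δ) := by
          gcongr
          exact le_div_self (by linarith [Real.log_two_gt_d9]) (Real.log_pos one_lt_two)
            (by linarith [Real.log_two_lt_d9])
  · calc Real.exp (-(ε ^ 2 / 4) * ⌈x⌉₊) ≤ Real.exp (-Real.log (2 / δ)) := by
          refine Real.exp_le_exp.2 ?_
          have hεx : ε ^ 2 * x = 4 * Real.log (2 / δ) := by
            have := hε.1.ne'
            rw [hx_def, inv_pow]; field_simp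
          nlinarith [Nat.le_ceil x]
      _ = δ / 2 := by rw [Real.exp_neg, Real.exp_log (div_pos two_pos hδ.1), inv_div]
      _ ≤ δ := by linarith [hδ.1]

/-- with `P = {p₁, p₂}` as above and `D = [−1,1]^X`, distribution-free agnostic
OI is solvable with `n = O(ε⁻² log(2/δ))` samples, uniformly in `m`. -/
theorem statement_16 :
    ∃ c : ℝ, 0 < c ∧
      ∀ ε δ : ℝ, ε ∈ Set.Ioo (0 : ℝ) 1 → δ ∈ Set.Ioo (0 : ℝ) 1 →
        ∃ n : ℕ, 0 < n ∧ (n : ℝ) ≤ c * ε⁻¹ ^ 2 * Real.logb 2 (2 / δ) ∧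
          ∀ m : ℕ, 0 < m →
            ∃ A : Learner (Cube m) n,
              DFAL {pLow m, pHigh m} {d : Cube m → ℝ | Dist1 d} ε δ n A := by
  refine ⟨8, by norm_num, fun ε δ hε hδ => ?_⟩
  obtain ⟨n, hn0, hn, hconf⟩ := exists_sampleSize hε hδ
  refine ⟨n, hn0, hn, fun m _ => ⟨testLearner (pLow m) (pHigh m) (botStat m) n, ?_⟩⟩
  intro μ pstar hpstar
  refine achievesAg_testLearner (predictor_pLow m) (predictor_pHigh m) (abs_botStat_le m) ?_
    hε.1.le hconf
  rw [pexp_exDist_botStat m μ (hpstar none).1 (hpstar none).2,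
    dnorm_pLow_sub_sub_dnorm_pHigh_sub m μ hpstar]
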